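/- Let x, x' ∈ Δ_d have strictly positive coordinates, let Â ∈ ℝ^{d×d} and y ∈ Δ_d with y having nonnegative coordinates, and suppose the matrix E ∈ ℝ^{d×d} satisfies |E_{ij}| ≤ ε/√(x_i y_j) for all i,j where all y_j > 0. Then |⟨x' − x, E y⟩| ≤ ε √(d Q), where Q = ∑_i (x'_i − x_i)²/(x'_i x_i). -/

import Mathlib

open Finset

/-- The probability simplex in `ℝ^d`. -/
def simplex (d : ℕ) : Set (Fin d → ℝ) := {x | (∀ i, 0 ≤ x i) ∧ ∑ i, x i = 1}

/-- if `x, x' ∈ Δ_d` have positive coordinates, `y ∈ Δ_d` has positive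
coordinates, and `|E_{ij}| ≤ ε/√(x_i y_j)`, then `|⟨x' − x, E y⟩| ≤ ε √(d Q)` where
`Q = ∑ (x'_i − x_i)²/(x'_i x_i)`. -/
theorem inner_diff_matrix_bound (d : ℕ) (x x' y : Fin d → ℝ) (E : Fin d → Fin d → ℝ)
    (hx : x ∈ simplex d) (hx' : x' ∈ simplex d) (hy : y ∈ simplex d)
    (hxpos : ∀ i, 0 < x i) (hx'pos : ∀ i, 0 < x' i) (hypos : ∀ j, 0 < y j)
    (ε : ℝ) (hε : 0 ≤ ε)
    (hE : ∀ i j, |E i j| ≤ ε / Real.sqrt (x i * y j)) :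
    |∑ i, (x' i - x i) * (∑ j, E i j * y j)| ≤
      ε * Real.sqrt (d * ∑ i, (x' i - x i) ^ 2 / (x' i * x i)) := by
  set Q : ℝ := ∑ i, (x' i - x i) ^ 2 / (x' i * x i) with hQ
  have hQ0 : 0 ≤ Q := Finset.sum_nonneg fun i _ =>
    div_nonneg (sq_nonneg _) (mul_pos (hx'pos i) (hxpos i)).le
  -- Step A : ∑ √(y j) ≤ √d
  have stepA : ∑ j, Real.sqrt (y j) ≤ Real.sqrt d := by
    have := Real.sum_sqrt_mul_sqrt_le (univ : Finset (Fin d))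
      (f := y) (g := fun _ => (1 : ℝ)) (fun j => (hypos j).le) (fun _ => zero_le_one)
    simpa [hy.2, Finset.card_univ] using this
  -- Step B : |∑ j, E i j * y j| ≤ ε * √d / √(x i)
  have stepB : ∀ i, |∑ j, E i j * y j| ≤ ε * Real.sqrt d / Real.sqrt (x i) := by
    intro i
    calc |∑ j, E i j * y j| ≤ ∑ j, |E i j * y j| := Finset.abs_sum_le_sum_abs _ _
      _ ≤ ∑ j, ε / Real.sqrt (x i) * Real.sqrt (y j) := by
          apply Finset.sum_le_sum
          intro j _
          rw [abs_mul, abs_of_nonneg (hypos j).le]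
          have h1 : |E i j| * y j ≤ ε / Real.sqrt (x i * y j) * y j :=
            mul_le_mul_of_nonneg_right (hE i j) (hypos j).le
          refine h1.trans (le_of_eq ?_)
          rw [Real.sqrt_mul (hxpos i).le]
          have hyj : Real.sqrt (y j) * Real.sqrt (y j) = y j :=
            Real.mul_self_sqrt (hypos j).le
          have hsx : Real.sqrt (x i) ≠ 0 := ne_of_gt (Real.sqrt_pos.mpr (hxpos i))
          have hsy : Real.sqrt (y j) ≠ 0 := ne_of_gt (Real.sqrt_pos.mpr (hypos j))
          rw [← hyj]
          field_simp
          rw [Real.sq_sqrt (sq_nonneg (Real.sqrt (y j)))]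
      _ = ε / Real.sqrt (x i) * ∑ j, Real.sqrt (y j) := by rw [Finset.mul_sum]
      _ ≤ ε / Real.sqrt (x i) * Real.sqrt d := by
          apply mul_le_mul_of_nonneg_left stepA
          positivity
      _ = ε * Real.sqrt d / Real.sqrt (x i) := by ring
  -- Step C+D
  calc |∑ i, (x' i - x i) * (∑ j, E i j * y j)|
      ≤ ∑ i, |(x' i - x i) * (∑ j, E i j * y j)| := Finset.abs_sum_le_sum_abs _ _
    _ ≤ ∑ i, |x' i - x i| * (ε * Real.sqrt d / Real.sqrt (x i)) := by
        apply Finset.sum_le_sum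
        intro i _
        rw [abs_mul]
        exact mul_le_mul_of_nonneg_left (stepB i) (abs_nonneg _)
    _ = ε * Real.sqrt d * ∑ i, |x' i - x i| / Real.sqrt (x i) := by
        rw [Finset.mul_sum]; congr 1; ext i; ring
    _ ≤ ε * Real.sqrt d * (Real.sqrt Q * 1) := by
        apply mul_le_mul_of_nonneg_left _ (by positivity)
        have key : ∑ i, |x' i - x i| / Real.sqrt (x i)
            = ∑ i, (|x' i - x i| / Real.sqrt (x' i * x i)) * Real.sqrt (x' i) := by
          apply Finset.sum_congr rfl
          intro i _
          rw [Real.sqrt_mul (hx'pos i).le]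
          have hsx : Real.sqrt (x i) ≠ 0 := ne_of_gt (Real.sqrt_pos.mpr (hxpos i))
          have hsx' : Real.sqrt (x' i) ≠ 0 := ne_of_gt (Real.sqrt_pos.mpr (hx'pos i))
          field_simp
        rw [key]
        have cs := Real.sum_mul_le_sqrt_mul_sqrt (univ : Finset (Fin d))
          (fun i => |x' i - x i| / Real.sqrt (x' i * x i)) (fun i => Real.sqrt (x' i))
        refine cs.trans (le_of_eq ?_)
        congr 1
        · congr 1
          apply Finset.sum_congr rfl
          intro i _
          rw [div_pow, sq_abs, Real.sq_sqrt (mul_pos (hx'pos i) (hxpos i)).le]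
        · rw [show (∑ i, Real.sqrt (x' i) ^ 2) = ∑ i, x' i from
            Finset.sum_congr rfl fun i _ => Real.sq_sqrt (hx'pos i).le, hx'.2, Real.sqrt_one]
    _ = ε * Real.sqrt (d * Q) := by
        rw [Real.sqrt_mul (Nat.cast_nonneg d), mul_one, mul_assoc]
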